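/- Let ε ∈ (0, 1/4), a = log 2, g_ε(x) = x + (ε/(2π))(1 − cos(2πx)), and define F(t) = g_ε'(t)·e^{−a{log g_ε'(t)/a}}·(1 − e^{−a}). Then ∫₀¹ F(t) dt = (3/4)(1 − e^{−a}), while ∫₀¹ F(x/2) dx = 1 − e^{−a}. In particular the ratio of these integrals equals 4/3, which differs from 1 + 2ε/π = 2·g_ε(1/2) for every ε ∈ (0,1/4). -/

import Mathlib

open Real

lemma key1 (v : ℝ) (h1 : 1 ≤ v) (h2 : v < 2) :
    v * Real.exp (-Real.log 2 * Int.fract (Real.log v / Real.log 2)) = 1 := by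
  have hl2 : (0:ℝ) < Real.log 2 := Real.log_pos one_lt_two
  have hv : (0:ℝ) < v := lt_of_lt_of_le one_pos h1
  have h0 : 0 ≤ Real.log v / Real.log 2 := div_nonneg (Real.log_nonneg h1) hl2.le
  have h1' : Real.log v / Real.log 2 < 1 := (div_lt_one hl2).mpr (Real.log_lt_log hv h2)
  rw [Int.fract_eq_self.mpr ⟨h0, h1'⟩]
  have heq : -Real.log 2 * (Real.log v / Real.log 2) = -Real.log v := by
    field_simp
  rw [heq, Real.exp_neg, Real.exp_log hv, mul_inv_cancel₀ hv.ne']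

lemma key2 (v : ℝ) (h1 : 1/2 < v) (h2 : v < 1) :
    v * Real.exp (-Real.log 2 * Int.fract (Real.log v / Real.log 2)) = 1/2 := by
  have hl2 : (0:ℝ) < Real.log 2 := Real.log_pos one_lt_two
  have hv : (0:ℝ) < v := by linarith
  have hlogv_lt : Real.log v < 0 := Real.log_neg hv h2
  have hlogv_gt : -Real.log 2 < Real.log v := by
    have := Real.log_lt_log (show (0:ℝ) < 1/2 by norm_num) h1
    rwa [show (1/2:ℝ) = 2⁻¹ by norm_num, Real.log_inv] at this
  set x := Real.log v / Real.log 2 with hx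
  have hx1 : -1 < x := by rw [hx, lt_div_iff₀ hl2]; linarith
  have hx0 : x < 0 := div_neg_of_neg_of_pos hlogv_lt hl2
  have hfloor : ⌊x⌋ = -1 := by
    rw [Int.floor_eq_iff]
    push_cast
    constructor <;> linarith
  have hfr : Int.fract x = x + 1 := by
    rw [Int.fract, hfloor]; push_cast; ring
  rw [hfr]
  have heq : -Real.log 2 * (x + 1) = -Real.log v + -Real.log 2 := by
    rw [hx]; field_simp; ring
  rw [heq, Real.exp_add, Real.exp_neg, Real.exp_log hv, Real.exp_neg, Real.exp_log two_pos]
  field_simp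

/-- For `ε ∈ (0,1/4)`, `a = log 2`, `g_ε(x) = x + (ε/(2π))(1 - cos(2πx))`
(so `g_ε'(t) = 1 + ε sin(2πt)`), and
`F(t) = g_ε'(t) e^{-a {log g_ε'(t)/a}} (1 - e^{-a})`,
one has `∫₀¹ F = (3/4)(1 - e^{-a})` while `∫₀¹ F(x/2) dx = 1 - e^{-a}`;
the ratio is `4/3 ≠ 1 + 2ε/π = 2 g_ε(1/2)`. -/
theorem lattice_integral_example (ε : ℝ) (hε : ε ∈ Set.Ioo (0 : ℝ) (1/4)) :
    let a : ℝ := Real.log 2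
    let F : ℝ → ℝ := fun t =>
      (1 + ε * Real.sin (2 * π * t)) *
        Real.exp (-a * Int.fract (Real.log (1 + ε * Real.sin (2 * π * t)) / a)) *
        (1 - Real.exp (-a))
    (∫ t in (0:ℝ)..1, F t) = (3/4) * (1 - Real.exp (-a)) ∧
    (∫ x in (0:ℝ)..1, F (x/2)) = 1 - Real.exp (-a) ∧
    (∫ x in (0:ℝ)..1, F (x/2)) / (∫ t in (0:ℝ)..1, F t) = 4/3 ∧
    (4/3 : ℝ) ≠ 1 + 2 * ε / π ∧
    1 + 2 * ε / π =
      2 * ((1/2 : ℝ) + (ε / (2 * π)) * (1 - Real.cos (2 * π * (1/2)))) := by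
  intro a F
  obtain ⟨hε0, hε4⟩ := hε
  have hπ : (0:ℝ) < π := Real.pi_pos
  set c : ℝ := 1 - Real.exp (-a) with hc
  have hcval : c = 1/2 := by
    rw [hc, Real.exp_neg, Real.exp_log two_pos]; norm_num
  have hFpos : ∀ t : ℝ, 0 ≤ Real.sin (2 * π * t) → F t = c := by
    intro t hs
    have hs1 : Real.sin (2 * π * t) ≤ 1 := Real.sin_le_one _
    have hv1 : 1 ≤ 1 + ε * Real.sin (2 * π * t) := by nlinarith
    have hv2 : 1 + ε * Real.sin (2 * π * t) < 2 := by nlinarith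
    show (1 + ε * Real.sin (2 * π * t)) * _ * c = c
    rw [key1 _ hv1 hv2, one_mul]
  have hFneg : ∀ t : ℝ, Real.sin (2 * π * t) < 0 → F t = (1/2) * c := by
    intro t hs
    have hs1 : -1 ≤ Real.sin (2 * π * t) := Real.neg_one_le_sin _
    have hv1 : 1/2 < 1 + ε * Real.sin (2 * π * t) := by nlinarith
    have hv2 : 1 + ε * Real.sin (2 * π * t) < 1 := by nlinarith
    show (1 + ε * Real.sin (2 * π * t)) * _ * c = (1/2) * c
    rw [key2 _ hv1 hv2]
  -- first half: t ∈ [0, 1/2] has sin(2πt) ≥ 0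
  have hsin_half : ∀ t ∈ Set.Icc (0:ℝ) (1/2), 0 ≤ Real.sin (2 * π * t) := by
    intro t ht
    apply Real.sin_nonneg_of_nonneg_of_le_pi
    · have := ht.1; positivity
    · nlinarith [ht.2]
  have hI1 : (∫ t in (0:ℝ)..(1/2), F t) = (1/2) * c := by
    rw [intervalIntegral.integral_congr (g := fun _ => c)
      (fun t ht => hFpos t (hsin_half t (by rwa [Set.uIcc_of_le (by norm_num)] at ht)))]
    simp [smul_eq_mul]
  -- second half
  have hI2 : (∫ t in (1/2:ℝ)..1, F t) = (1/4) * c := by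
    have hcongr : (∫ t in (1/2:ℝ)..1, F t) = ∫ _t in (1/2:ℝ)..1, (1/2) * c := by
      apply intervalIntegral.integral_congr_ae
      have hae : ∀ᵐ (t : ℝ), t ≠ 1 := by
        rw [Filter.eventually_iff, MeasureTheory.mem_ae_iff]
        simp
      filter_upwards [hae] with t ht hmem
      rw [Set.uIoc_of_le (by norm_num)] at hmem
      have ht1 : t < 1 := lt_of_le_of_ne hmem.2 ht
      apply hFneg
      have : Real.sin (2 * π * t) = Real.sin (2 * π * t - 2 * π) := (Real.sin_sub_two_pi _).symm
      rw [this]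
      apply Real.sin_neg_of_neg_of_neg_pi_lt
      · have h := (mul_lt_mul_iff_right₀ (show (0:ℝ) < 2*π by positivity)).mpr ht1
        linarith
      · have h := (mul_lt_mul_iff_right₀ (show (0:ℝ) < 2*π by positivity)).mpr hmem.1
        linarith
    rw [hcongr]
    simp [smul_eq_mul]; ring
  -- integrability of F on the two halves
  have hint1 : IntervalIntegrable F MeasureTheory.volume 0 (1/2) := by
    rw [intervalIntegrable_iff]
    have hconst : MeasureTheory.IntegrableOn (fun _ : ℝ => c) (Set.uIoc (0:ℝ) (1/2)) :=
      (MeasureTheory.integrableOn_const_iff).mpr (Or.inr (by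
        rw [Set.uIoc_of_le (by norm_num)]; exact measure_Ioc_lt_top))
    apply hconst.congr
    apply MeasureTheory.ae_restrict_of_forall_mem measurableSet_uIoc
    intro t ht
    rw [Set.uIoc_of_le (by norm_num)] at ht
    exact (hFpos t (hsin_half t ⟨ht.1.le, ht.2⟩)).symm
  have hint2 : IntervalIntegrable F MeasureTheory.volume (1/2) 1 := by
    rw [intervalIntegrable_iff]
    have hconst : MeasureTheory.IntegrableOn (fun _ : ℝ => (1/2) * c) (Set.uIoc (1/2:ℝ) 1) :=
      (MeasureTheory.integrableOn_const_iff).mpr (Or.inr (by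
        rw [Set.uIoc_of_le (by norm_num)]; exact measure_Ioc_lt_top))
    apply hconst.congr
    rw [Filter.EventuallyEq, MeasureTheory.ae_restrict_iff' measurableSet_uIoc]
    have hae : ∀ᵐ (t : ℝ), t ≠ 1 := by
      rw [Filter.eventually_iff, MeasureTheory.mem_ae_iff]
      simp
    filter_upwards [hae] with t ht hmem
    rw [Set.uIoc_of_le (by norm_num)] at hmem
    have ht1 : t < 1 := lt_of_le_of_ne hmem.2 ht
    refine (hFneg t ?_).symm
    have hper : Real.sin (2 * π * t) = Real.sin (2 * π * t - 2 * π) :=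
      (Real.sin_sub_two_pi _).symm
    rw [hper]
    apply Real.sin_neg_of_neg_of_neg_pi_lt
    · have h := (mul_lt_mul_iff_right₀ (show (0:ℝ) < 2*π by positivity)).mpr ht1
      linarith
    · have h := (mul_lt_mul_iff_right₀ (show (0:ℝ) < 2*π by positivity)).mpr hmem.1
      linarith
  have hItot : (∫ t in (0:ℝ)..1, F t) = (3/4) * c := by
    rw [← intervalIntegral.integral_add_adjacent_intervals hint1 hint2, hI1, hI2]; ring
  have hJ : (∫ x in (0:ℝ)..1, F (x/2)) = c := by
    rw [intervalIntegral.integral_congr (g := fun _ => c) (fun x hx => by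
      rw [Set.uIcc_of_le (by norm_num)] at hx
      exact hFpos _ (hsin_half (x/2) ⟨by linarith [hx.1], by linarith [hx.2]⟩))]
    simp
  refine ⟨hItot, hJ, ?_, ?_, ?_⟩
  · rw [hJ, hItot, hcval]; norm_num
  · intro h
    have hπ3 : (3:ℝ) < π := Real.pi_gt_three
    have h1 : 2 * ε / π < 1/3 := by
      rw [div_lt_iff₀ hπ]
      nlinarith
    linarith
  · rw [show 2 * π * (1/2:ℝ) = π by ring, Real.cos_pi]
    field_simp
    ring
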